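/- arXiv:1309.6406 — 2 statements merged into one kernel-verified Lean document; each statement's English description precedes it below -/
import Mathlib

section
/- Let $X$ be a locally compact Hausdorff space. The functor $A \mapsto C_0(X, A)$ on the category of Banach algebras with contractive homomorphisms preserves direct limits: if $A = \varinjlim A_i$ with contractive connecting maps $\varphi_{j,i}$, then $C_0(X, A)$ together with the maps $C_0(X, \varphi_i)$ satisfies the universal property of $\varinjlim C_0(X, A_i)$. -/
open Filter Topology

open scoped ZeroAtInfty

universe u v

/-!
Write `Φ i = C₀(X, φ i)` and `F i j = C₀(X, f i j)`. Two properties of the cocone `Φ` suffice: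
the union of the ranges of the `Φ i` is dense, and `‖γ i b‖ ≤ ‖Φ i b‖` for every compatible family
of contractive homomorphisms `γ i`. Given these, the `γ i` glue to a contractive homomorphism on the
dense subalgebra `⋃ i, range (Φ i)`, and this extends uniquely by continuity.

Density: outside a compact set `K` a given `g ∈ C₀(X, B)` is small, and a partition of unity
subordinate to a finite cover of `K` turns pointwise approximations of `g` by elements of the dense
set `⋃ i, range (φ i)` into a uniform approximation lying in some `range (Φ i)`.

Norm bound: `‖γ i b‖ = ‖γ j (F i j b)‖ ≤ ‖F i j b‖`, and `‖F i j b‖ = sup_x ‖f i j (b x)‖`. The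
functions `a ↦ ‖f i j a‖` are `1`-Lipschitz, so their pointwise convergence to `‖φ i a‖` is uniform
on the compact set `b '' K`, while outside `K` both are bounded by the small `‖b x‖`.
-/

theorem EquicontinuousOn.tendstoUniformlyOn_of_tendsto {ι X α : Type*} [TopologicalSpace X]
    [UniformSpace α] {F : ι → X → α} {f : X → α} {l : Filter ι} {K : Set X} (hK : IsCompact K)
    (hF : EquicontinuousOn F K) (h : ∀ x ∈ K, Tendsto (F · x) l (𝓝 (f x))) :
    TendstoUniformlyOn F f l K := by
  have := (EquicontinuousOn.tendsto_uniformOnFun_iff_pi' (𝔖 := {K}) (by simpa using hK)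
    (by simpa using hF) l f).mpr (tendsto_pi_nhds.mpr fun x => h x (by simpa using x.2))
  exact UniformOnFun.tendsto_iff_tendstoUniformlyOn.mp this K rfl

theorem norm_sum_smul_sub_le {ι E : Type*} [NormedAddCommGroup E] [NormedSpace ℝ E]
    (s : Finset ι) (w : ι → ℝ) (c : ι → E) (v : E) {δ : ℝ} (hδ : 0 ≤ δ)
    (hw : ∀ k, 0 ≤ w k) (hw_sum : ∑ k ∈ s, w k ≤ 1) (hc : ∀ k, w k ≠ 0 → ‖c k - v‖ ≤ δ) :
    ‖∑ k ∈ s, w k • c k - v‖ ≤ δ + (1 - ∑ k ∈ s, w k) * ‖v‖ := by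
  have hsplit : ∑ k ∈ s, w k • c k - v =
      ∑ k ∈ s, w k • (c k - v) - (1 - ∑ k ∈ s, w k) • v := by
    simp only [smul_sub, Finset.sum_sub_distrib, ← Finset.sum_smul, sub_smul, one_smul]
    abel
  have hterm : ∀ k, ‖w k • (c k - v)‖ ≤ w k * δ := fun k => by
    rw [norm_smul, Real.norm_of_nonneg (hw k)]
    rcases eq_or_ne (w k) 0 with h | h
    · simp [h]
    · exact mul_le_mul_of_nonneg_left (hc k h) (hw k)
  calc ‖∑ k ∈ s, w k • c k - v‖
      ≤ ∑ k ∈ s, ‖w k • (c k - v)‖ + ‖(1 - ∑ k ∈ s, w k) • v‖ := by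
        rw [hsplit]; exact (norm_sub_le _ _).trans (add_le_add_left (norm_sum_le _ _) _)
    _ ≤ (∑ k ∈ s, w k) * δ + (1 - ∑ k ∈ s, w k) * ‖v‖ := by
        rw [Finset.sum_mul, norm_smul, Real.norm_of_nonneg (sub_nonneg.mpr hw_sum)]
        exact add_le_add_left (Finset.sum_le_sum fun k _ => hterm k) _
    _ ≤ δ + (1 - ∑ k ∈ s, w k) * ‖v‖ := by
        gcongr; exact mul_le_of_le_one_left hδ hw_sum

theorem PartitionOfUnity.norm_sum_smul_sub_le_two_mul {ι X E : Type*} [Fintype ι]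
    [TopologicalSpace X] [NormedAddCommGroup E] [NormedSpace ℝ E] {K : Set X}
    (p : PartitionOfUnity ι X K) (c : ι → E) (v : E) {x : X} {δ : ℝ} (hδ : 0 ≤ δ) (hc : ∀ i, p i x ≠ 0 → ‖c i - v‖ ≤ δ)
    (hv : x ∉ K → ‖v‖ ≤ δ) : ‖∑ i, p i x • c i - v‖ ≤ 2 * δ := by
  have hsum : ∑ i, p i x ≤ 1 := by simpa [finsum_eq_sum_of_fintype] using p.sum_le_one x
  rw [two_mul]
  refine (norm_sum_smul_sub_le _ _ _ _ hδ (p.nonneg · x) hsum hc).trans (add_le_add le_rfl ?_)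
  by_cases hx : x ∈ K
  · have hsum_eq : ∑ i, p i x = 1 := by simpa [finsum_eq_sum_of_fintype] using p.sum_eq_one hx
    rw [hsum_eq, sub_self, zero_mul]
    exact hδ
  · calc (1 - ∑ i, p i x) * ‖v‖ ≤ 1 * ‖v‖ := by
          gcongr; linarith [Finset.sum_nonneg fun i (_ : i ∈ Finset.univ) => p.nonneg i x]
      _ ≤ δ := by rw [one_mul]; exact hv hx

namespace ZeroAtInftyContinuousMap

variable {X E : Type*} [TopologicalSpace X] [NormedAddCommGroup E]

theorem norm_le_of_forall_le (g : C₀(X, E)) {c : ℝ} (hc : 0 ≤ c) (h : ∀ x, ‖g x‖ ≤ c) :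
    ‖g‖ ≤ c := by
  rw [← norm_toBCF_eq_norm]
  exact (BoundedContinuousFunction.norm_le hc).mpr h

theorem norm_apply_le (g : C₀(X, E)) (x : X) : ‖g x‖ ≤ ‖g‖ := by
  rw [← norm_toBCF_eq_norm]
  exact g.toBCF.norm_coe_le_norm x

theorem exists_isCompact_norm_lt (g : C₀(X, E)) {ε : ℝ} (hε : 0 < ε) :
    ∃ K, IsCompact K ∧ ∀ x ∉ K, ‖g x‖ < ε := by
  have : ∀ᶠ x in cocompact X, ‖g x‖ < ε := by
    simpa using (zero_at_infty g).eventually (Metric.ball_mem_nhds 0 hε)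
  obtain ⟨K, hK, hKε⟩ := mem_cocompact.mp this
  exact ⟨K, hK, fun x hx => hKε hx⟩

theorem eventually_forall_le_add {ι : Type*} {l : Filter ι} (g : C₀(X, E)) {N : ι → E → ℝ}
    {G : E → ℝ} (hN : ∀ j, LipschitzWith 1 (N j)) (hN_le : ∀ j a, N j a ≤ ‖a‖) (hG : ∀ a, 0 ≤ G a)
    (h : ∀ a, Tendsto (N · a) l (𝓝 (G a))) {ε : ℝ} (hε : 0 < ε) :
    ∀ᶠ j in l, ∀ x, N j (g x) ≤ G (g x) + ε := by
  obtain ⟨K, hK, hKε⟩ := g.exists_isCompact_norm_lt hε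
  have hunif : TendstoUniformlyOn N G l (g '' K) :=
    (LipschitzWith.uniformEquicontinuous N 1 hN).equicontinuous.equicontinuousOn _
      |>.tendstoUniformlyOn_of_tendsto (hK.image g.continuous) fun a _ => h a
  filter_upwards [Metric.tendstoUniformlyOn_iff.mp hunif ε hε] with j hj x
  by_cases hx : x ∈ K
  · have := hj (g x) ⟨x, hx, rfl⟩
    rw [Real.dist_eq] at this
    linarith [neg_abs_le (G (g x) - N j (g x))]
  · linarith [hN_le j (g x), hKε x hx, hG (g x)]

def smulConst {𝕜 : Type*} [NormedField 𝕜] [NormedSpace 𝕜 E] (p : C₀(X, 𝕜)) (c : E) :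
    C₀(X, E) where
  toFun x := p x • c
  continuous_toFun := p.continuous.smul continuous_const
  zero_at_infty' := by simpa using (zero_at_infty p).smul_const c

theorem smulConst_apply {𝕜 : Type*} [NormedField 𝕜] [NormedSpace 𝕜 E] (p : C₀(X, 𝕜)) (c : E)
    (x : X) : smulConst p c x = p x • c := rfl

theorem dense_of_smulConst_mem [LocallyCompactSpace X] [T2Space X] [NormedSpace ℝ E] {S : Set E}
    (hS : Dense S) (M : AddSubmonoid C₀(X, E))
    (hM : ∀ (p : C₀(X, ℝ)) c, c ∈ S → smulConst p c ∈ M) :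
    Dense (M : Set C₀(X, E)) := by
  refine Metric.dense_iff.mpr fun g ε hε => ?_
  obtain ⟨δ, hδ, hδε⟩ : ∃ δ, 0 < δ ∧ 2 * δ < ε := ⟨ε / 4, by positivity, by linarith⟩
  obtain ⟨K, hK, hKδ⟩ := g.exists_isCompact_norm_lt hδ
  have hc : ∀ x, ∃ c ∈ S, ‖c - g x‖ < δ := fun x => by
    obtain ⟨c, hcx, hcS⟩ := Metric.dense_iff.mp hS (g x) δ hδ
    exact ⟨c, hcS, by rwa [← dist_eq_norm]⟩
  choose c hcS hc using hc
  let U (y : X) : Set X := {x | ‖c y - g x‖ < δ}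
  have hU : ∀ y, IsOpen (U y) := fun y =>
    isOpen_lt (continuous_const.sub g.continuous).norm continuous_const
  obtain ⟨T, hT⟩ := hK.elim_finite_subcover U hU fun x _ => Set.mem_iUnion.mpr ⟨x, hc x⟩
  obtain ⟨p, hpU, hp⟩ := PartitionOfUnity.exists_isSubordinate_of_locallyFinite_t2space hK
    (fun y : T => U y) (fun _ => hU _) (locallyFinite_of_finite _)
    (by simpa [Set.iUnion_subtype] using hT)
  let a : C₀(X, E) := ∑ y : T, smulConst ⟨p y, (hp y).is_zero_at_infty⟩ (c y)
  refine ⟨a, ?_, sum_mem fun y _ => hM _ _ (hcS y)⟩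
  rw [Metric.mem_ball, dist_eq_norm]
  refine lt_of_le_of_lt (norm_le_of_forall_le _ (by positivity) fun x => ?_) hδε
  have hax : a x = ∑ y : T, p y x • c y :=
    map_sum (AddMonoidHom.mk' (fun u : C₀(X, E) => u x) fun _ _ => rfl) _ _
  have hnear : ∀ y : T, p y x ≠ 0 → ‖c y - g x‖ ≤ δ := fun y hy =>
    (hpU y (subset_tsupport _ hy)).le
  rw [coe_sub, Pi.sub_apply, hax]
  exact p.norm_sum_smul_sub_le_two_mul (fun y => c y) (g x) hδ.le hnear fun hx => (hKδ x hx).le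

end ZeroAtInftyContinuousMap

section Extension

variable {𝕜 V D : Type*} [NontriviallyNormedField 𝕜]
  [NonUnitalNormedRing V] [NormedSpace 𝕜 V] [NonUnitalNormedRing D] [NormedSpace 𝕜 D]
  [CompleteSpace D]

theorem NonUnitalAlgHom.existsUnique_extend_of_dense {M : NonUnitalSubalgebra 𝕜 V}
    (hM : Dense (M : Set V)) (g₀ : M →ₙₐ[𝕜] D) (hg₀ : ∀ m, ‖g₀ m‖ ≤ ‖m‖) :
    ∃! g : V →ₙₐ[𝕜] D, (∀ v, ‖g v‖ ≤ ‖v‖) ∧ ∀ m : M, g m = g₀ m := by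
  let ι : M →L[𝕜] V := ⟨SMulMemClass.subtype M, continuous_subtype_val⟩
  have hι : DenseRange ((↑) : M → V) := hM.denseRange_val
  let L : M →L[𝕜] D := (SemilinearMapClass.semilinearMap g₀).mkContinuous 1 (by simpa using hg₀)
  let G := L.extend ι
  have hG : ∀ m : M, G m = g₀ m :=
    L.extend_eq (e := ι) hι isUniformEmbedding_subtype_val.isUniformInducing
  have hGnorm : ∀ v, ‖G v‖ ≤ ‖v‖ := fun v => hι.induction_on v
    (isClosed_le G.continuous.norm continuous_norm) fun m => by rw [hG]; exact hg₀ m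
  have hGmul : ∀ u v, G (u * v) = G u * G v := hι.induction_on₂
    (isClosed_eq (G.continuous.comp continuous_mul)
      ((G.continuous.comp continuous_fst).mul (G.continuous.comp continuous_snd)))
    fun m m' => by rw [hG, hG, ← map_mul, ← hG]; rfl
  refine ⟨{ G.toLinearMap with map_zero' := map_zero G, map_mul' := hGmul },
    ⟨hGnorm, hG⟩, fun g ⟨hgnorm, hg⟩ => ?_⟩
  have hgc : Continuous g := AddMonoidHomClass.continuous_of_bound g 1 (by simpa using hgnorm)
  exact DFunLike.coe_injective <| hι.equalizer hgc G.continuous <| funext fun m =>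
    (hg m).trans (hG m).symm

end Extension

theorem norm_le_of_forall_exists_norm_le_add {ι D : Type*} [Preorder ι] {C : ι → Type*}
    [∀ i, Norm (C i)] [Norm D] {F : ∀ i j, i ≤ j → C i → C j} {γ : ∀ i, C i → D}
    (hγc : ∀ i b, ‖γ i b‖ ≤ ‖b‖) (hγ : ∀ i j (h : i ≤ j) b, γ j (F i j h b) = γ i b)
    {i : ι} {b : C i} {r : ℝ} (h : ∀ ε > 0, ∃ j h, ‖F i j h b‖ ≤ r + ε) : ‖γ i b‖ ≤ r :=
  le_of_forall_pos_le_add fun ε hε =>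
    let ⟨j, hij, hj⟩ := h ε hε
    hγ i j hij b ▸ (hγc j _).trans hj

section DirectedSystem

variable {𝕜 ι V D : Type*} [NontriviallyNormedField 𝕜] [Preorder ι] [IsDirectedOrder ι]
  {C : ι → Type*} [∀ i, NonUnitalRing (C i)] [∀ i, Module 𝕜 (C i)]
  [NonUnitalNormedRing V] [NormedSpace 𝕜 V] [NonUnitalNormedRing D] [NormedSpace 𝕜 D]
  {F : ∀ i j, i ≤ j → C i →ₙₐ[𝕜] C j} {Φ : ∀ i, C i →ₙₐ[𝕜] V} {γ : ∀ i, C i →ₙₐ[𝕜] D}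

theorem exists_common_preimage_of_mem_iUnion_range
    (hΦ : ∀ i j (h : i ≤ j) b, Φ j (F i j h b) = Φ i b) {v v' : V}
    (hv : v ∈ ⋃ i, Set.range (Φ i)) (hv' : v' ∈ ⋃ i, Set.range (Φ i)) :
    ∃ k c c', Φ k c = v ∧ Φ k c' = v' := by
  obtain ⟨i, b, rfl⟩ := Set.mem_iUnion.mp hv
  obtain ⟨j, b', rfl⟩ := Set.mem_iUnion.mp hv'
  obtain ⟨k, hik, hjk⟩ := directed_of (· ≤ ·) i j
  exact ⟨k, F i k hik b, F j k hjk b', hΦ i k hik b, hΦ j k hjk b'⟩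

variable (F Φ) in
def iUnionRangeSubalgebra [Nonempty ι] (hΦ : ∀ i j (h : i ≤ j) b, Φ j (F i j h b) = Φ i b) :
    NonUnitalSubalgebra 𝕜 V where
  carrier := ⋃ i, Set.range (Φ i)
  zero_mem' := Set.mem_iUnion.mpr ⟨Classical.arbitrary ι, 0, map_zero _⟩
  add_mem' hv hv' := by
    obtain ⟨k, c, c', rfl, rfl⟩ := exists_common_preimage_of_mem_iUnion_range hΦ hv hv'
    exact Set.mem_iUnion.mpr ⟨k, c + c', map_add _ _ _⟩
  mul_mem' hv hv' := by
    obtain ⟨k, c, c', rfl, rfl⟩ := exists_common_preimage_of_mem_iUnion_range hΦ hv hv'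
    exact Set.mem_iUnion.mpr ⟨k, c * c', map_mul _ _ _⟩
  smul_mem' r v hv := by
    obtain ⟨i, b, rfl⟩ := Set.mem_iUnion.mp hv
    exact Set.mem_iUnion.mpr ⟨i, r • b, map_smul _ _ _⟩

theorem factorsThrough_of_norm_le (hΦ : ∀ i j (h : i ≤ j) b, Φ j (F i j h b) = Φ i b)
    (hγ : ∀ i j (h : i ≤ j) b, γ j (F i j h b) = γ i b) (hγΦ : ∀ i b, ‖γ i b‖ ≤ ‖Φ i b‖) :
    Function.FactorsThrough (fun p : Σ i, C i => γ p.1 p.2) (fun p => Φ p.1 p.2) := by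
  rintro ⟨i, b⟩ ⟨j, b'⟩ (h : Φ i b = Φ j b')
  obtain ⟨k, hik, hjk⟩ := directed_of (· ≤ ·) i j
  change γ i b = γ j b'
  rw [← hγ i k hik, ← hγ j k hjk, ← sub_eq_zero, ← map_sub, ← norm_le_zero_iff]
  calc ‖γ k (F i k hik b - F j k hjk b')‖ ≤ ‖Φ k (F i k hik b - F j k hjk b')‖ := hγΦ _ _
    _ = 0 := by rw [map_sub, hΦ, hΦ, h, sub_self, norm_zero]

section Lift

variable [Nonempty ι] (hΦ : ∀ i j (h : i ≤ j) b, Φ j (F i j h b) = Φ i b)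
  (hγ : ∀ i j (h : i ≤ j) b, γ j (F i j h b) = γ i b) (hγΦ : ∀ i b, ‖γ i b‖ ≤ ‖Φ i b‖)

noncomputable def iUnionRangeLift : iUnionRangeSubalgebra F Φ hΦ →ₙₐ[𝕜] D :=
  have hext (i : ι) (b : C i) :
      Function.extend (fun p : Σ i, C i => Φ p.1 p.2) (fun p => γ p.1 p.2) 0 (Φ i b) = γ i b :=
    (factorsThrough_of_norm_le hΦ hγ hγΦ).extend_apply 0 ⟨i, b⟩
  { toFun v := Function.extend (fun p : Σ i, C i => Φ p.1 p.2) (fun p => γ p.1 p.2) 0 v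
    map_smul' r := by
      rintro ⟨_, hv⟩
      obtain ⟨i, b, rfl⟩ := Set.mem_iUnion.mp hv
      simp only [NonUnitalSubalgebra.coe_smul, ← map_smul, hext, MonoidHom.id_apply]
    map_zero' := by
      simpa only [map_zero, ZeroMemClass.coe_zero] using hext (Classical.arbitrary ι) 0
    map_add' := by
      rintro ⟨_, hv⟩ ⟨_, hv'⟩
      obtain ⟨k, c, c', rfl, rfl⟩ := exists_common_preimage_of_mem_iUnion_range hΦ hv hv'
      simp only [NonUnitalSubalgebra.coe_add, ← map_add, hext]
    map_mul' := by
      rintro ⟨_, hv⟩ ⟨_, hv'⟩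
      obtain ⟨k, c, c', rfl, rfl⟩ := exists_common_preimage_of_mem_iUnion_range hΦ hv hv'
      simp only [NonUnitalSubalgebra.coe_mul, ← map_mul, hext] }

theorem iUnionRangeLift_apply (i : ι) (b : C i) (hb : Φ i b ∈ iUnionRangeSubalgebra F Φ hΦ) :
    iUnionRangeLift hΦ hγ hγΦ ⟨Φ i b, hb⟩ = γ i b :=
  (factorsThrough_of_norm_le hΦ hγ hγΦ).extend_apply 0 ⟨i, b⟩

theorem norm_iUnionRangeLift_le (v : iUnionRangeSubalgebra F Φ hΦ) :
    ‖iUnionRangeLift hΦ hγ hγΦ v‖ ≤ ‖v‖ := by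
  obtain ⟨_, hv⟩ := v
  obtain ⟨i, b, rfl⟩ := Set.mem_iUnion.mp hv
  rw [iUnionRangeLift_apply]
  exact hγΦ i b

end Lift

theorem existsUnique_lift_of_dense_iUnion_range [Nonempty ι] [CompleteSpace D]
    (hΦ : ∀ i j (h : i ≤ j) b, Φ j (F i j h b) = Φ i b) (hdense : Dense (⋃ i, Set.range (Φ i)))
    (hγ : ∀ i j (h : i ≤ j) b, γ j (F i j h b) = γ i b) (hγΦ : ∀ i b, ‖γ i b‖ ≤ ‖Φ i b‖) :
    ∃! g : V →ₙₐ[𝕜] D, (∀ v, ‖g v‖ ≤ ‖v‖) ∧ ∀ i b, g (Φ i b) = γ i b := by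
  obtain ⟨g, ⟨hgnorm, hg⟩, huniq⟩ := NonUnitalAlgHom.existsUnique_extend_of_dense
    (M := iUnionRangeSubalgebra F Φ hΦ) hdense _ (norm_iUnionRangeLift_le hΦ hγ hγΦ)
  refine ⟨g, ⟨hgnorm, fun i b => ?_⟩, fun g' ⟨hg'norm, hg'⟩ => huniq g' ⟨hg'norm, ?_⟩⟩
  · exact (hg ⟨Φ i b, Set.mem_iUnion.mpr ⟨i, b, rfl⟩⟩).trans (iUnionRangeLift_apply ..)
  · rintro ⟨_, hv⟩
    obtain ⟨i, b, rfl⟩ := Set.mem_iUnion.mp hv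
    exact (hg' i b).trans (iUnionRangeLift_apply ..).symm

end DirectedSystem

instance isDirectedOrder_subtype_le {I : Type*} [Preorder I] [IsDirectedOrder I] (i : I) :
    IsDirectedOrder {j // i ≤ j} where
  directed a b :=
    let ⟨c, hac, hbc⟩ := directed_of (· ≤ ·) a.1 b.1
    ⟨⟨c, a.2.trans hac⟩, hac, hbc⟩

section DirectLimitOfC₀

variable {X : Type*} [TopologicalSpace X] {I : Type*} [Preorder I] [IsDirectedOrder I]
  {A : I → Type*} {B : Type*}

theorem exists_norm_le_add_of_tendsto_norm [∀ i, NormedAddCommGroup (A i)] [NormedAddCommGroup B]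
    (f : ∀ i j, i ≤ j → A i →+ A j)
    (hfc : ∀ i j (h : i ≤ j) a, ‖f i j h a‖ ≤ ‖a‖) (φ : ∀ i, A i → B)
    (hφnorm : ∀ i a, Tendsto (fun j : {j // i ≤ j} => ‖f i j.1 j.2 a‖) atTop (𝓝 ‖φ i a‖))
    (F : ∀ i j, i ≤ j → C₀(X, A i) → C₀(X, A j)) (hF : ∀ i j h b x, F i j h b x = f i j h (b x))
    (Φ : ∀ i, C₀(X, A i) → C₀(X, B)) (hΦ : ∀ i b x, Φ i b x = φ i (b x))
    {i : I} (b : C₀(X, A i)) {ε : ℝ} (hε : 0 < ε) : ∃ j h, ‖F i j h b‖ ≤ ‖Φ i b‖ + ε := by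
  have hlip : ∀ j : {j // i ≤ j}, LipschitzWith 1 fun a => ‖f i j.1 j.2 a‖ := fun j =>
    LipschitzWith.of_dist_le_mul fun a a' => by
      rw [NNReal.coe_one, one_mul, Real.dist_eq, dist_eq_norm]
      calc |‖f i j.1 j.2 a‖ - ‖f i j.1 j.2 a'‖| ≤ ‖f i j.1 j.2 a - f i j.1 j.2 a'‖ :=
            abs_norm_sub_norm_le _ _
        _ ≤ ‖a - a'‖ := map_sub (f i j.1 j.2) a a' ▸ hfc i j.1 j.2 (a - a')
  obtain ⟨j, hj⟩ := eventually_atTop.mp <| b.eventually_forall_le_add hlip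
    (fun j => hfc i j.1 j.2) (fun _ => norm_nonneg _) (hφnorm i) hε
  refine ⟨j.1, j.2, ZeroAtInftyContinuousMap.norm_le_of_forall_le _ (by positivity) fun x => ?_⟩
  rw [hF]
  calc ‖f i j.1 j.2 (b x)‖ ≤ ‖φ i (b x)‖ + ε := hj j le_rfl x
    _ ≤ ‖Φ i b‖ + ε := by rw [← hΦ]; gcongr; exact (Φ i b).norm_apply_le x

theorem dense_iUnion_range_of_apply_eq [LocallyCompactSpace X] [T2Space X] [Nonempty I]
    [∀ i, NonUnitalNormedRing (A i)] [∀ i, NormedSpace ℂ (A i)] [NonUnitalNormedRing B]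
    [NormedSpace ℂ B] {φ : ∀ i, A i →ₙₐ[ℂ] B} (hφdense : Dense (⋃ i, Set.range (φ i)))
    {F : ∀ i j, i ≤ j → C₀(X, A i) →ₙₐ[ℂ] C₀(X, A j)} {Φ : ∀ i, C₀(X, A i) →ₙₐ[ℂ] C₀(X, B)}
    (hΦF : ∀ i j (h : i ≤ j) b, Φ j (F i j h b) = Φ i b) (hΦ : ∀ i b x, Φ i b x = φ i (b x)) :
    Dense (⋃ i, Set.range (Φ i)) := by
  refine ZeroAtInftyContinuousMap.dense_of_smulConst_mem hφdense
    (iUnionRangeSubalgebra F Φ hΦF).toNonUnitalSubsemiring.toAddSubmonoid fun p c hc => ?_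
  obtain ⟨i, a, rfl⟩ := Set.mem_iUnion.mp hc
  refine Set.mem_iUnion.mpr ⟨i, p.smulConst a, ZeroAtInftyContinuousMap.ext fun x => ?_⟩
  rw [hΦ, ZeroAtInftyContinuousMap.smulConst_apply, ZeroAtInftyContinuousMap.smulConst_apply,
    LinearMapClass.map_smul_of_tower]

end DirectLimitOfC₀

theorem c0_functor_preserves_banach_algebra_direct_limit_general
    {X : Type u} [TopologicalSpace X] [LocallyCompactSpace X] [T2Space X]
    {I : Type u} [Preorder I] [IsDirected I (· ≤ ·)] [Nonempty I]
    (A : I → Type v) [∀ i, NonUnitalNormedRing (A i)] [∀ i, NormedSpace ℂ (A i)]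
    {B : Type v} [NonUnitalNormedRing B] [NormedSpace ℂ B]
    -- the direct system and its limit `B = lim A i`
    (f : ∀ i j, i ≤ j → (A i →ₙₐ[ℂ] A j))
    (hfc : ∀ i j (h : i ≤ j) (a : A i), ‖f i j h a‖ ≤ ‖a‖)
    (φ : ∀ i, A i →ₙₐ[ℂ] B)
    (hφcomp : ∀ i j (h : i ≤ j) (a : A i), φ j (f i j h a) = φ i a)
    (hφdense : Dense (⋃ i, Set.range (φ i)))
    (hφnorm : ∀ i (a : A i),
      Filter.Tendsto (fun j : {j // i ≤ j} => ‖f i j.1 j.2 a‖) Filter.atTop (nhds ‖φ i a‖))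
    -- the induced connecting maps `C₀(X, f i j)` and canonical maps `C₀(X, φ i)`
    (F : ∀ i j, i ≤ j → (C₀(X, A i) →ₙₐ[ℂ] C₀(X, A j)))
    (hF : ∀ i j (h : i ≤ j) (b : C₀(X, A i)) (x : X), F i j h b x = f i j h (b x))
    (Φ : ∀ i, C₀(X, A i) →ₙₐ[ℂ] C₀(X, B))
    (hΦ : ∀ i (b : C₀(X, A i)) (x : X), Φ i b x = φ i (b x)) :
    -- universal property of `lim C₀(X, A i)` for `C₀(X, B)` with the maps `Φ i`
    ∀ (D : Type v) [NonUnitalNormedRing D] [NormedSpace ℂ D]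
      [IsScalarTower ℂ D D] [SMulCommClass ℂ D D] [CompleteSpace D]
      (γ : ∀ i, C₀(X, A i) →ₙₐ[ℂ] D),
      (∀ i (b : C₀(X, A i)), ‖γ i b‖ ≤ ‖b‖) →
      (∀ i j (h : i ≤ j) (b : C₀(X, A i)), γ j (F i j h b) = γ i b) →
      ∃! g : C₀(X, B) →ₙₐ[ℂ] D,
        (∀ b, ‖g b‖ ≤ ‖b‖) ∧ ∀ i (b : C₀(X, A i)), g (Φ i b) = γ i b := by
  intro D _ _ _ _ _ γ hγc hγF
  have hΦF : ∀ i j (h : i ≤ j) b, Φ j (F i j h b) = Φ i b := fun i j h b =>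
    ZeroAtInftyContinuousMap.ext fun x => by rw [hΦ, hF, hφcomp, hΦ]
  have hdense : Dense (⋃ i, Set.range (Φ i)) := dense_iUnion_range_of_apply_eq hφdense hΦF hΦ
  have hγΦ : ∀ i b, ‖γ i b‖ ≤ ‖Φ i b‖ := fun i b =>
    norm_le_of_forall_exists_norm_le_add hγc hγF fun ε hε =>
      exists_norm_le_add_of_tendsto_norm (fun i j h => f i j h) hfc (fun i => φ i) hφnorm
        (fun i j h => F i j h) hF (fun i => Φ i) hΦ b hε
  exact existsUnique_lift_of_dense_iUnion_range hΦF hdense hγF hγΦ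

/-- The functor `A ↦ C₀(X, A)` on Banach algebras with contractive homomorphisms
preserves direct limits: if `A = lim A_i` (witnessed by canonical contractive maps
`φ i : A i → A` with dense union of images and the norm formula), then `C₀(X, A)`,
together with the induced maps `C₀(X, φ i) : C₀(X, A i) → C₀(X, A)` (given
pointwise by `b ↦ φ i ∘ b`), satisfies the universal property of the direct limit
of the system `C₀(X, A i)` with the induced connecting maps. -/
theorem c0_functor_preserves_banach_algebra_direct_limit
    {X : Type u} [TopologicalSpace X] [LocallyCompactSpace X] [T2Space X]
    {I : Type u} [Preorder I] [IsDirected I (· ≤ ·)] [Nonempty I]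
    (A : I → Type v) [∀ i, NonUnitalNormedRing (A i)] [∀ i, NormedSpace ℂ (A i)]
    [∀ i, IsScalarTower ℂ (A i) (A i)] [∀ i, SMulCommClass ℂ (A i) (A i)]
    [∀ i, CompleteSpace (A i)]
    {B : Type v} [NonUnitalNormedRing B] [NormedSpace ℂ B]
    [IsScalarTower ℂ B B] [SMulCommClass ℂ B B] [CompleteSpace B]
    -- the direct system and its limit `B = lim A i`
    (f : ∀ i j, i ≤ j → (A i →ₙₐ[ℂ] A j))
    (hfc : ∀ i j (h : i ≤ j) (a : A i), ‖f i j h a‖ ≤ ‖a‖)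
    (φ : ∀ i, A i →ₙₐ[ℂ] B)
    (hφc : ∀ i (a : A i), ‖φ i a‖ ≤ ‖a‖)
    (hφcomp : ∀ i j (h : i ≤ j) (a : A i), φ j (f i j h a) = φ i a)
    (hφdense : Dense (⋃ i, Set.range (φ i)))
    (hφnorm : ∀ i (a : A i),
      Filter.Tendsto (fun j : {j // i ≤ j} => ‖f i j.1 j.2 a‖) Filter.atTop (nhds ‖φ i a‖))
    -- the induced connecting maps `C₀(X, f i j)` and canonical maps `C₀(X, φ i)`
    (F : ∀ i j, i ≤ j → (C₀(X, A i) →ₙₐ[ℂ] C₀(X, A j)))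
    (hF : ∀ i j (h : i ≤ j) (b : C₀(X, A i)) (x : X), F i j h b x = f i j h (b x))
    (Φ : ∀ i, C₀(X, A i) →ₙₐ[ℂ] C₀(X, B))
    (hΦ : ∀ i (b : C₀(X, A i)) (x : X), Φ i b x = φ i (b x)) :
    -- universal property of `lim C₀(X, A i)` for `C₀(X, B)` with the maps `Φ i`
    ∀ (D : Type v) [NonUnitalNormedRing D] [NormedSpace ℂ D]
      [IsScalarTower ℂ D D] [SMulCommClass ℂ D D] [CompleteSpace D]
      (γ : ∀ i, C₀(X, A i) →ₙₐ[ℂ] D),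
      (∀ i (b : C₀(X, A i)), ‖γ i b‖ ≤ ‖b‖) →
      (∀ i j (h : i ≤ j) (b : C₀(X, A i)), γ j (F i j h b) = γ i b) →
      ∃! g : C₀(X, B) →ₙₐ[ℂ] D,
        (∀ b, ‖g b‖ ≤ ‖b‖) ∧ ∀ i (b : C₀(X, A i)), g (Φ i b) = γ i b :=
  c0_functor_preserves_banach_algebra_direct_limit_general A f hfc φ hφcomp hφdense hφnorm F hF Φ hΦ
end

section
/- Let $G$ be a discrete group acting freely on a compact Hausdorff space $X$, and let $g \in G \setminus \{1\}$. Then for every $x \in X$ there exist an open neighborhood $U$ of $x$ and continuous functions $s_1, s_2 : X \to S^1$ (circle-valued) such that $\frac{1}{2}\left(s_1(y)\overline{s_1(g^{-1}y)} + s_2(y)\overline{s_2(g^{-1}y)}\right) = 0$ for all $y \in U$. -/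
/-! Separate `x` from `g⁻¹ • x` (distinct by freeness) by open sets `A`, `B` with disjoint
closures, and let `s₂` be a circle-valued Urysohn function equal to `1` on `closure A` and to
`-1` on `closure B`. On `U = A ∩ g • B` the point `g⁻¹ • y` lies in `B`, so with `s₁ ≡ 1` the
sum is `1 · 1 + 1 · conj (-1) = 0`. -/

open Complex Set Pointwise

theorem exists_unimodular_eqOn_one_eqOn_neg_one {X : Type*} [TopologicalSpace X] [NormalSpace X]
    {s t : Set X} (hs : IsClosed s) (ht : IsClosed t) (hst : Disjoint s t) :
    ∃ f : C(X, ℂ), (∀ y, ‖f y‖ = 1) ∧ EqOn f 1 s ∧ EqOn f (-1) t := by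
  obtain ⟨r, hr₀, hr₁, -⟩ := exists_continuous_zero_one_of_isClosed hs ht hst
  refine ⟨⟨fun y => exp (↑(Real.pi * r y) * I), by fun_prop⟩,
    fun y => norm_exp_ofReal_mul_I _, fun y hy => ?_, fun y hy => ?_⟩
  · simp [hr₀ hy]
  · simp [hr₁ hy, exp_pi_mul_I]

/-- Let a discrete group `G` act freely and continuously on a compact Hausdorff
space `X`, and let `g ∈ G` with `g ≠ 1`. Then every `x ∈ X` has an open
neighborhood `U` and there are continuous circle-valued functions `s₁, s₂ : X → S¹`
such that `(1/2)(s₁(y)·conj(s₁(g⁻¹y)) + s₂(y)·conj(s₂(g⁻¹y))) = 0` for all `y ∈ U`. -/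
theorem free_action_local_two_function_cancellation
    {G X : Type*} [Group G] [TopologicalSpace X] [CompactSpace X] [T2Space X]
    [MulAction G X] [ContinuousConstSMul G X]
    (hfree : ∀ (g : G) (x : X), g • x = x → g = 1)
    (g : G) (hg : g ≠ 1) (x : X) :
    ∃ U : Set X, IsOpen U ∧ x ∈ U ∧
      ∃ s₁ s₂ : C(X, ℂ),
        (∀ y, ‖s₁ y‖ = 1) ∧ (∀ y, ‖s₂ y‖ = 1) ∧
        ∀ y ∈ U,
          (1 / 2 : ℂ) * (s₁ y * (starRingEnd ℂ) (s₁ (g⁻¹ • y)) +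
            s₂ y * (starRingEnd ℂ) (s₂ (g⁻¹ • y))) = 0 := by
  have hne : x ≠ g⁻¹ • x := fun h => hg (inv_eq_one.mp (hfree g⁻¹ x h.symm))
  obtain ⟨A, hxA, hA, B, hxB, hB, hAB⟩ := exists_open_nhds_disjoint_closure hne
  obtain ⟨f, hf_norm, hf_one, hf_neg_one⟩ :=
    exists_unimodular_eqOn_one_eqOn_neg_one isClosed_closure isClosed_closure hAB
  refine ⟨A ∩ g • B, hA.inter (hB.smul g), ⟨hxA, mem_smul_set_iff_inv_smul_mem.mpr hxB⟩,
    ContinuousMap.const X 1, f, by simp, hf_norm, ?_⟩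
  rintro y ⟨hyA, hyB⟩
  have hfy : f y = 1 := hf_one (subset_closure hyA)
  have hfgy : f (g⁻¹ • y) = -1 :=
    hf_neg_one (subset_closure (mem_smul_set_iff_inv_smul_mem.mp hyB))
  simp [hfy, hfgy]
end
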